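/- Discrete fundamental-theorem identity (equation (3.13) in the proof of Lemma 3.3): for every α ∈ (0,1), every partition 0 = t_0 < ⋯ < t_N = T, every real sequence (w^j)_{j=0}^{N}, and every 1 ≤ n ≤ N, one has Σ_{j=1}^{n} P^{n,j}_α · D^α_{t_j} w^j = w^n − w^0, where D^α_{t_j} w^j = Σ_{k=1}^{j} K^{j,k}_{1−α}(w^k − w^{k−1}). -/

import Mathlib

open Finset

/-- The kernel `k_β(s) = s^(β-1)/Γ(β)`. -/
noncomputable def kker (β s : ℝ) : ℝ := s ^ (β - 1) / Real.Gamma β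

/-- The discrete L1 kernels `K^{n,j}_{1-α}`. -/
noncomputable def Kd (α : ℝ) (t : ℕ → ℝ) (n j : ℕ) : ℝ :=
  (kker (2 - α) (t n - t (j - 1)) - kker (2 - α) (t n - t j)) / (t j - t (j - 1))

/-- The complementary discrete kernels `P^{n,i}_α`, defined by downward recursion. -/
noncomputable def Pd (α : ℝ) (t : ℕ → ℝ) (n i : ℕ) : ℝ :=
  if i = n then 1 / Kd α t n n
  else (1 / Kd α t i i) *
    ∑ j ∈ (Finset.Ioc i n).attach,
      Pd α t n j.1 * (Kd α t j.1 (i + 1) - Kd α t j.1 i)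
termination_by n - i
decreasing_by
  have h := Finset.mem_Ioc.mp j.2
  omega

/-- The discrete (L1) Caputo fractional derivative
`D^α_{t_n} w^n = Σ_{j=1}^{n} K^{n,j}_{1-α} (w^j - w^{j-1})`. -/
noncomputable def Dcap (α : ℝ) (t : ℕ → ℝ) (w : ℕ → ℝ) (n : ℕ) : ℝ :=
  ∑ j ∈ Finset.Icc 1 n, Kd α t n j * (w j - w (j - 1))
/-!
Exchanging the order of summation turns the left-hand side into
`∑ₖ (∑_{j=k}^{n} P^{n,j} K^{j,k}) (w^k - w^{k-1})`. The recursion defining `P` says precisely that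
each column sum `∑_{j=k}^{n} P^{n,j} K^{j,k}` equals the next one, `∑_{j=k+1}^{n} P^{n,j} K^{j,k+1}`,
and the last one is `P^{n,n} K^{n,n} = 1`; so all column sums are `1` (this only needs `K^{k,k} ≠ 0`)
and the sum telescopes to `w^n - w^0`.
-/

section

variable {α : ℝ} {t : ℕ → ℝ}

theorem kker_zero {β : ℝ} (hβ : 1 < β) : kker β 0 = 0 := by
  rw [kker, Real.zero_rpow (by linarith), zero_div]

theorem Kd_self_pos (hα : α < 1) {k : ℕ} (hk : t (k - 1) < t k) : 0 < Kd α t k k := by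
  rw [Kd, sub_self, kker_zero (by linarith), sub_zero, kker]
  have hΓ : 0 < Real.Gamma (2 - α) := Real.Gamma_pos_of_pos (by linarith)
  exact div_pos (div_pos (Real.rpow_pos_of_pos (by linarith) _) hΓ) (by linarith)

theorem Pd_self (n : ℕ) : Pd α t n n = 1 / Kd α t n n := by
  rw [Pd, if_pos rfl]

theorem Pd_of_lt {n i : ℕ} (h : i < n) :
    Pd α t n i = 1 / Kd α t i i *
      ∑ j ∈ Ioc i n, Pd α t n j * (Kd α t j (i + 1) - Kd α t j i) := by
  rw [Pd, if_neg h.ne, sum_attach (Ioc i n) fun j => Pd α t n j * (Kd α t j (i + 1) - Kd α t j i)]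

theorem sum_Pd_mul_Kd_eq_one {n k : ℕ} (hkn : k ≤ n) (hK : ∀ i ∈ Icc k n, Kd α t i i ≠ 0) :
    ∑ j ∈ Icc k n, Pd α t n j * Kd α t j k = 1 := by
  obtain rfl | hlt := hkn.eq_or_lt
  · rw [Icc_self, sum_singleton, Pd_self, one_div_mul_cancel (hK k (by simp))]
  have next_column : ∑ j ∈ Ioc k n, Pd α t n j * Kd α t j (k + 1) = 1 := by
    rw [← Icc_add_one_left_eq_Ioc]
    exact sum_Pd_mul_Kd_eq_one hlt fun i hi => hK i (by simp only [mem_Icc] at hi ⊢; omega)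
  rw [Icc_eq_cons_Ioc hlt.le, sum_cons, Pd_of_lt hlt, mul_right_comm,
    one_div_mul_cancel (hK k (by simp [hkn])), one_mul, ← sum_add_distrib, ← next_column]
  exact sum_congr rfl fun j _ => by ring
termination_by n - k

theorem sum_Pd_mul_Dcap (w : ℕ → ℝ) (n : ℕ) :
    ∑ j ∈ Icc 1 n, Pd α t n j * Dcap α t w j =
      ∑ k ∈ Icc 1 n, (∑ j ∈ Icc k n, Pd α t n j * Kd α t j k) * (w k - w (k - 1)) := by
  simp_rw [Dcap, mul_sum, sum_mul, mul_assoc]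
  exact sum_comm' fun j k => by simp only [mem_Icc]; omega

theorem sum_Icc_sub_pred (w : ℕ → ℝ) (n : ℕ) :
    ∑ k ∈ Icc 1 n, (w k - w (k - 1)) = w n - w 0 := by
  induction n with
  | zero => simp
  | succ n ih => rw [sum_Icc_succ_top n.succ_pos, ih, Nat.add_sub_cancel]; ring

theorem sum_Pd_mul_Dcap_eq_sub {n : ℕ} (hK : ∀ i ∈ Icc 1 n, Kd α t i i ≠ 0) (w : ℕ → ℝ) :
    ∑ j ∈ Icc 1 n, Pd α t n j * Dcap α t w j = w n - w 0 := by
  rw [sum_Pd_mul_Dcap, ← sum_Icc_sub_pred w n]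
  refine sum_congr rfl fun k hk => ?_
  have hk' := mem_Icc.mp hk
  rw [sum_Pd_mul_Kd_eq_one hk'.2 fun i hi => hK i (by simp only [mem_Icc] at hi ⊢; omega), one_mul]

end

theorem discrete_fundamental_identity_general
    (α : ℝ) (N : ℕ) (t : ℕ → ℝ)
    (hα1 : α < 1)
    (hmono : ∀ j, j < N → t j < t (j + 1))
    (w : ℕ → ℝ) :
    ∀ n, 1 ≤ n → n ≤ N →
      ∑ j ∈ Finset.Icc 1 n, Pd α t n j * Dcap α t w j = w n - w 0 := by
  intro n _ hnN
  refine sum_Pd_mul_Dcap_eq_sub (fun k hk => (Kd_self_pos hα1 ?_).ne') w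
  obtain ⟨hk1, hkn⟩ := mem_Icc.mp hk
  simpa [Nat.sub_add_cancel hk1] using hmono (k - 1) (by omega)

/-- Discrete fundamental-theorem identity (equation (3.13)):
`Σ_{j=1}^{n} P^{n,j}_α D^α_{t_j} w^j = w^n - w^0` for every `1 ≤ n ≤ N`. -/
theorem discrete_fundamental_identity
    (α T : ℝ) (N : ℕ) (t : ℕ → ℝ)
    (hα0 : 0 < α) (hα1 : α < 1) (hT : 0 < T)
    (ht0 : t 0 = 0) (htN : t N = T)
    (hmono : ∀ j, j < N → t j < t (j + 1))
    (w : ℕ → ℝ) :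
    ∀ n, 1 ≤ n → n ≤ N →
      ∑ j ∈ Finset.Icc 1 n, Pd α t n j * Dcap α t w j = w n - w 0 :=
  discrete_fundamental_identity_general α N t hα1 hmono w
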